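/- Let n be a positive integer. For each i = 0, …, n−1 let V_i and W_i be finite-dimensional vector spaces over ℚ, and suppose given nondegenerate bilinear pairings B_i : V_i × W_{n−1−i} → ℚ. Let λ be a nonzero rational number and let f_i : V_i → V_i and g_i : W_i → W_i be linear endomorphisms such that B_i(f_i(x), g_{n−1−i}(y)) = λ·B_i(x, y) for all i, all x ∈ V_i and all y ∈ W_{n−1−i}. Set χ = Σ_{i=0}^{n−1} (−1)^i · dim V_i. Then for every nonzero rational number z such that all the determinants det(id − z·g_i) and det(id − (λz)⁻¹·f_i) are nonzero, one has Π_{i=0}^{n−1} det(id − (λz)⁻¹·f_i)^{(−1)^{i+1}} = (−λz)^χ · ( Π_{k=0}^{n−1} det(id − z·g_k)^{(−1)^{k+1}} )^{(−1)^{n−1}} · Π_{i=0}^{n−1} (det f_i)^{(−1)^{i+1}}, with all signed exponents taken as integer powers (zpow) in ℚ. -/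
import Mathlib

open Module LinearMap

lemma det_dualMap_eq {K V : Type*} [Field K] [AddCommGroup V] [Module K V]
    [FiniteDimensional K V] (f : V →ₗ[K] V) :
    LinearMap.det (f.dualMap) = LinearMap.det f := by
  classical
  let b := Module.finBasis K V
  rw [← LinearMap.det_toMatrix b f, ← LinearMap.det_toMatrix b.dualBasis f.dualMap,
    LinearMap.dualMap_def, LinearMap.toMatrix_transpose, Matrix.det_transpose]

lemma key_pair {V W : Type*} [AddCommGroup V] [Module ℚ V] [FiniteDimensional ℚ V]
    [AddCommGroup W] [Module ℚ W] [FiniteDimensional ℚ W]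
    (B : V →ₗ[ℚ] W →ₗ[ℚ] ℚ)
    (hB1 : ∀ x, (∀ y, B x y = 0) → x = 0)
    (hB2 : ∀ y, (∀ x, B x y = 0) → y = 0)
    (l z : ℚ) (hl : l ≠ 0) (hz : z ≠ 0)
    (f : V →ₗ[ℚ] V) (g : W →ₗ[ℚ] W)
    (hfg : ∀ x y, B (f x) (g y) = l * B x y) :
    LinearMap.det f ≠ 0 ∧
    LinearMap.det (LinearMap.id - (l * z)⁻¹ • f)
      = (-(l * z)) ^ (-(Module.finrank ℚ V : ℤ)) * LinearMap.det f
        * LinearMap.det (LinearMap.id - z • g) := by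
  have hinj : Function.Injective B := by
    rw [← LinearMap.ker_eq_bot, LinearMap.ker_eq_bot']
    intro x hx
    exact hB1 x fun y => by rw [hx]; rfl
  have hinj' : Function.Injective B.flip := by
    rw [← LinearMap.ker_eq_bot, LinearMap.ker_eq_bot']
    intro y hy
    exact hB2 y fun x => by
      have := congrFun (congrArg DFunLike.coe hy) x
      simpa using this
  have hdim : finrank ℚ V = finrank ℚ W := by
    have h1 : finrank ℚ V ≤ finrank ℚ (Module.Dual ℚ W) :=
      LinearMap.finrank_le_finrank_of_injective hinj
    have h2 : finrank ℚ W ≤ finrank ℚ (Module.Dual ℚ V) :=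
      LinearMap.finrank_le_finrank_of_injective hinj'
    rw [Subspace.dual_finrank_eq] at h1 h2
    omega
  set d := finrank ℚ V with hd
  have hdim' : finrank ℚ V = finrank ℚ (Module.Dual ℚ W) := by
    rw [Subspace.dual_finrank_eq]; exact hdim
  let e : V ≃ₗ[ℚ] Module.Dual ℚ W := LinearMap.linearEquivOfInjective B hinj hdim'
  have he : ∀ x, e x = B x := fun x => LinearMap.linearEquivOfInjective_apply hinj hdim' x
  let D : V →ₗ[ℚ] V := (e.symm : Module.Dual ℚ W →ₗ[ℚ] V) ∘ₗ g.dualMap ∘ₗ (e : V →ₗ[ℚ] Module.Dual ℚ W)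
  have hDf : D ∘ₗ f = l • LinearMap.id := by
    ext x
    show e.symm (g.dualMap (e (f x))) = l • x
    rw [LinearEquiv.symm_apply_eq]
    apply LinearMap.ext
    intro y
    simp [he, hfg, LinearMap.dualMap_apply]
  have hdetD : LinearMap.det D = LinearMap.det g := by
    have : D = (e.symm : Module.Dual ℚ W →ₗ[ℚ] V) ∘ₗ g.dualMap ∘ₗ
        ((e.symm.symm : V ≃ₗ[ℚ] Module.Dual ℚ W) : V →ₗ[ℚ] Module.Dual ℚ W) := by
      rw [LinearEquiv.symm_symm]
    rw [this, LinearMap.det_conj, det_dualMap_eq]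
  have hdetDf : LinearMap.det D * LinearMap.det f = l ^ d := by
    rw [← LinearMap.det_comp, hDf, LinearMap.det_smul, LinearMap.det_id, mul_one]
  have hf0 : LinearMap.det f ≠ 0 := by
    intro h
    rw [h, mul_zero] at hdetDf
    exact pow_ne_zero d hl hdetDf.symm
  have hD0 : LinearMap.det D ≠ 0 := by
    intro h
    rw [h, zero_mul] at hdetDf
    exact pow_ne_zero d hl hdetDf.symm
  refine ⟨hf0, ?_⟩
  have hcomp : D ∘ₗ (LinearMap.id - (l * z)⁻¹ • f) = (-z⁻¹) • (LinearMap.id - z • D) := by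
    have hDf' : ∀ x, D (f x) = l • x := fun x => congrFun (congrArg DFunLike.coe hDf) x
    ext x
    simp only [LinearMap.comp_apply, LinearMap.sub_apply, LinearMap.smul_apply,
      LinearMap.id_apply, map_sub, map_smul, hDf', smul_smul, smul_sub]
    rw [show ((l * z)⁻¹ * l) = z⁻¹ by field_simp,
      show ((-z⁻¹) * z : ℚ) = -1 by field_simp]
    module
  have hzd : LinearMap.det (LinearMap.id - z • D) = LinearMap.det (LinearMap.id - z • g) := by
    have h1 : (LinearMap.id - z • D : V →ₗ[ℚ] V) = (e.symm : Module.Dual ℚ W →ₗ[ℚ] V) ∘ₗ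
        (LinearMap.id - z • g.dualMap) ∘ₗ
        ((e.symm.symm : V ≃ₗ[ℚ] Module.Dual ℚ W) : V →ₗ[ℚ] Module.Dual ℚ W) := by
      rw [LinearEquiv.symm_symm]
      ext x
      simp [D]
    have h2 : (LinearMap.id - z • g.dualMap : Module.Dual ℚ W →ₗ[ℚ] Module.Dual ℚ W)
        = (LinearMap.id - z • g).dualMap := by
      apply LinearMap.ext; intro φ; apply LinearMap.ext; intro y
      simp [LinearMap.dualMap_apply]
    rw [h1, LinearMap.det_conj, h2, det_dualMap_eq]
  have hmain : LinearMap.det D * LinearMap.det (LinearMap.id - (l * z)⁻¹ • f)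
      = (-z⁻¹) ^ d * LinearMap.det (LinearMap.id - z • D) := by
    rw [← LinearMap.det_comp, hcomp, LinearMap.det_smul]
  rw [hzd] at hmain
  have hpow : (-(l * z)) ^ (-(d : ℤ)) = ((-(l * z)) ^ d)⁻¹ := by
    rw [zpow_neg, zpow_natCast]
  rw [hpow]
  have hlz : (-(l * z)) ^ d ≠ 0 := pow_ne_zero _ (neg_ne_zero.mpr (mul_ne_zero hl hz))
  have hX : LinearMap.det (LinearMap.id - (l * z)⁻¹ • f)
      = (LinearMap.det D)⁻¹ * ((-z⁻¹) ^ d * LinearMap.det (LinearMap.id - z • g)) := by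
    rw [← hmain, ← mul_assoc, inv_mul_cancel₀ hD0, one_mul]
  rw [hX]
  have hscal : (LinearMap.det D)⁻¹ * (-z⁻¹) ^ d = ((-(l * z)) ^ d)⁻¹ * LinearMap.det f := by
    have h1 : (-z⁻¹ : ℚ) ^ d * (-(l * z)) ^ d = l ^ d := by
      rw [← mul_pow]
      congr 1
      field_simp
    rw [← div_eq_inv_mul, ← div_eq_inv_mul, div_eq_div_iff hD0 hlz, h1, mul_comm]
    exact hdetDf.symm
  rw [← mul_assoc, hscal, mul_assoc]

lemma prod_zpow_const {ι : Type*} (s : Finset ι) (a : ℚ) (ha : a ≠ 0) (e : ι → ℤ) :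
    ∏ i ∈ s, a ^ e i = a ^ (∑ i ∈ s, e i) := by
  classical
  induction s using Finset.cons_induction with
  | empty => simp
  | cons i s hi ih => rw [Finset.prod_cons, Finset.sum_cons, zpow_add₀ ha, ih]

/-- Intermediate identity in the proof of the main theorem:
`Π det(id-(λz)⁻¹f_i)^{(-1)^{i+1}}
  = (-λz)^χ · (Π det(id-zg_k)^{(-1)^{k+1}})^{(-1)^{n-1}} · Π (det f_i)^{(-1)^{i+1}}`.
Here `i.rev` denotes `n - 1 - i`. -/
theorem stmt_7 (n : ℕ) (hn : 0 < n)
    (V W : Fin n → Type*)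
    [∀ i, AddCommGroup (V i)] [∀ i, Module ℚ (V i)] [∀ i, FiniteDimensional ℚ (V i)]
    [∀ i, AddCommGroup (W i)] [∀ i, Module ℚ (W i)] [∀ i, FiniteDimensional ℚ (W i)]
    (B : ∀ i, V i →ₗ[ℚ] W i.rev →ₗ[ℚ] ℚ)
    (hB1 : ∀ i, ∀ x : V i, (∀ y, B i x y = 0) → x = 0)
    (hB2 : ∀ i, ∀ y : W i.rev, (∀ x, B i x y = 0) → y = 0)
    (l : ℚ) (hl : l ≠ 0)
    (f : ∀ i, V i →ₗ[ℚ] V i) (g : ∀ i, W i →ₗ[ℚ] W i)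
    (hfg : ∀ i, ∀ (x : V i) (y : W i.rev), B i (f i x) (g i.rev y) = l * B i x y)
    (χ : ℤ) (hχ : χ = ∑ i : Fin n, (-1 : ℤ) ^ (i : ℕ) * (Module.finrank ℚ (V i) : ℤ))
    (z : ℚ) (hz : z ≠ 0)
    (hdg : ∀ i, LinearMap.det (LinearMap.id - z • g i) ≠ 0)
    (hdf' : ∀ i, LinearMap.det (LinearMap.id - (l * z)⁻¹ • f i) ≠ 0) :
    (∏ i : Fin n, LinearMap.det (LinearMap.id - (l * z)⁻¹ • f i) ^ ((-1 : ℤ) ^ ((i : ℕ) + 1)))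
    = (-(l * z)) ^ χ *
      (∏ k : Fin n, LinearMap.det (LinearMap.id - z • g k) ^ ((-1 : ℤ) ^ ((k : ℕ) + 1)))
        ^ ((-1 : ℤ) ^ (n - 1)) *
      ∏ i : Fin n, (LinearMap.det (f i)) ^ ((-1 : ℤ) ^ ((i : ℕ) + 1)) := by
  have hlz : (-(l * z) : ℚ) ≠ 0 := neg_ne_zero.mpr (mul_ne_zero hl hz)
  have hkey := fun i : Fin n =>
    key_pair (B i) (hB1 i) (hB2 i) l z hl hz (f i) (g i.rev) (hfg i)
  set F : Fin n → ℚ := fun k => LinearMap.det (LinearMap.id - z • g k) with hF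
  -- Step 1: rewrite each factor
  have step1 : (∏ i : Fin n,
        LinearMap.det (LinearMap.id - (l * z)⁻¹ • f i) ^ ((-1 : ℤ) ^ ((i : ℕ) + 1)))
      = (∏ i : Fin n, ((-(l * z)) ^ (-(Module.finrank ℚ (V i) : ℤ))) ^ ((-1 : ℤ) ^ ((i : ℕ) + 1)))
        * (∏ i : Fin n, (LinearMap.det (f i)) ^ ((-1 : ℤ) ^ ((i : ℕ) + 1)))
        * (∏ i : Fin n, (F i.rev) ^ ((-1 : ℤ) ^ ((i : ℕ) + 1))) := by
    rw [← Finset.prod_mul_distrib, ← Finset.prod_mul_distrib]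
    refine Finset.prod_congr rfl fun i _ => ?_
    rw [(hkey i).2, mul_zpow, mul_zpow]
  -- Step 2: the power-of-(-(l*z)) product is (-(l*z))^χ
  have step2 : (∏ i : Fin n,
        ((-(l * z)) ^ (-(Module.finrank ℚ (V i) : ℤ))) ^ ((-1 : ℤ) ^ ((i : ℕ) + 1)))
      = (-(l * z)) ^ χ := by
    have : ∀ i : Fin n,
        ((-(l * z)) ^ (-(Module.finrank ℚ (V i) : ℤ))) ^ ((-1 : ℤ) ^ ((i : ℕ) + 1))
        = (-(l * z)) ^ ((-1 : ℤ) ^ ((i : ℕ)) * (Module.finrank ℚ (V i) : ℤ)) := by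
      intro i
      rw [← zpow_mul]
      congr 1
      rw [pow_succ]
      ring
    rw [Finset.prod_congr rfl fun i _ => this i, prod_zpow_const _ _ hlz, hχ]
  -- Step 3: reindex the g-product
  have step3 : (∏ i : Fin n, (F i.rev) ^ ((-1 : ℤ) ^ ((i : ℕ) + 1)))
      = (∏ k : Fin n, F k ^ ((-1 : ℤ) ^ ((k : ℕ) + 1))) ^ ((-1 : ℤ) ^ (n - 1)) := by
    rw [← Finset.prod_zpow]
    apply Fintype.prod_equiv Fin.revPerm
      (fun i => (F i.rev) ^ ((-1 : ℤ) ^ ((i : ℕ) + 1)))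
      (fun k => (F k ^ ((-1 : ℤ) ^ ((k : ℕ) + 1))) ^ ((-1 : ℤ) ^ (n - 1)))
    intro i
    have hrev : (Fin.revPerm i : Fin n) = i.rev := rfl
    rw [hrev, ← zpow_mul, ← pow_add]
    congr 1
    have h1 : (i.rev : ℕ) = n - 1 - (i : ℕ) := by
      rw [Fin.val_rev]; omega
    have h2 : (i : ℕ) < n := i.isLt
    rw [neg_one_pow_eq_pow_mod_two, neg_one_pow_eq_pow_mod_two (n := (i.rev : ℕ) + 1 + (n - 1))]
    congr 1
    omega
  rw [step1, step2, step3]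
  ring
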